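/- Assume the standing assumptions. For every λ ∈ ℂ with λ ∉ {0, a, −a, b, −b}, the dimension (Module.rank over ℂ) of ker(U − λ·I) equals the dimension of ker(T − φ_{a,b}(λ)·I). In particular, λ is an eigenvalue of U if and only if φ_{a,b}(λ) is an eigenvalue of T. -/

import Mathlib

/-!
On the `λ`-eigenspace of `U = S C`, the coin equation `C ψ = λ S ψ` reads
`(a - b) d* d ψ = λ S ψ - b ψ`. Applying `d` and `d S` to it shows that `d ψ` is a
`φ_{a,b}(λ)`-eigenvector of `T`. Conversely `g ↦ b d* g + λ S d* g` sends `φ_{a,b}(λ)`-eigenvectors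
of `T` to `λ`-eigenvectors of `U`, and both composites of these two maps are multiplication by
`(λ² - b²) / (a - b)`, which is invertible for `λ ≠ ±b`. Below, `e` plays the role of `d*`: any
linear right inverse of `d` will do.
-/

open ContinuousLinearMap Function Module

namespace QuantumWalk

variable {𝕜 E F : Type*} [Field 𝕜] [AddCommGroup E] [Module 𝕜 E] [AddCommGroup F] [Module 𝕜 F]

def joukowsky (a b z : 𝕜) : 𝕜 := (z - a * b * z⁻¹) / (a - b)

lemma sub_mul_mul_joukowsky {a b z : 𝕜} (hab : a ≠ b) (hz : z ≠ 0) :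
    (a - b) * (z * joukowsky a b z) = z ^ 2 - a * b := by
  have := sub_ne_zero.mpr hab
  rw [joukowsky]
  field_simp

variable (d : E →ₗ[𝕜] F) (e : F →ₗ[𝕜] E) (S : E →ₗ[𝕜] E) (a b : 𝕜)

def coin : End 𝕜 E := a • (e ∘ₗ d) + b • (1 - e ∘ₗ d)

def walk : End 𝕜 E := S ∘ₗ coin d e a b

def discriminant : End 𝕜 F := d ∘ₗ S ∘ₗ e

def eigenLift (lam : 𝕜) : F →ₗ[𝕜] E := b • e + lam • (S ∘ₗ e)

variable {d e S a b}

lemma coin_apply (x : E) : coin d e a b x = b • x + (a - b) • e (d x) := by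
  simp only [coin, LinearMap.add_apply, LinearMap.smul_apply, LinearMap.sub_apply,
    LinearMap.comp_apply, End.one_apply]
  module

variable {lam : 𝕜} {ψ : E} {g : F}

lemma sub_smul_e_d_of_walk_eq (hS : Involutive S) (hψ : walk d e S a b ψ = lam • ψ) :
    (a - b) • e (d ψ) = lam • S ψ - b • ψ := by
  have hC : coin d e a b ψ = lam • S ψ := by
    rw [← hS (coin d e a b ψ), ← map_smul, ← hψ]
    rfl
  rw [coin_apply] at hC
  exact eq_sub_of_add_eq' hC

lemma smul_d_S_of_walk_eq (hde : LeftInverse d e) (hS : Involutive S)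
    (hψ : walk d e S a b ψ = lam • ψ) : lam • d (S ψ) = a • d ψ := by
  have h := congrArg d (sub_smul_e_d_of_walk_eq hS hψ)
  simp only [map_smul, map_sub, hde (d ψ)] at h
  linear_combination (norm := module) -h

lemma discriminant_d_of_walk_eq (hde : LeftInverse d e) (hS : Involutive S)
    (hab : a ≠ b) (hlam : lam ≠ 0) (hψ : walk d e S a b ψ = lam • ψ) :
    discriminant d e S (d ψ) = joukowsky a b lam • d ψ := by
  have h := congrArg (fun x => d (S x)) (sub_smul_e_d_of_walk_eq hS hψ)
  simp only [map_smul, map_sub, hS ψ] at h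
  apply smul_right_injective F (mul_ne_zero hlam (sub_ne_zero.mpr hab))
  simp only [discriminant, LinearMap.comp_apply, smul_smul]
  rw [mul_comm lam, mul_assoc, sub_mul_mul_joukowsky hab hlam]
  linear_combination (norm := module) lam • h - b • smul_d_S_of_walk_eq hde hS hψ

lemma sub_smul_eigenLift_d_of_walk_eq (hS : Involutive S) (hψ : walk d e S a b ψ = lam • ψ) :
    (a - b) • eigenLift e S b lam (d ψ) = (lam ^ 2 - b ^ 2) • ψ := by
  have h := sub_smul_e_d_of_walk_eq hS hψ
  have hS' := congrArg S h
  simp only [map_smul, map_sub, hS ψ] at hS'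
  simp only [eigenLift, LinearMap.add_apply, LinearMap.smul_apply, LinearMap.comp_apply]
  linear_combination (norm := module) b • h + lam • hS'

lemma walk_eigenLift (hde : LeftInverse d e) (hS : Involutive S) (hab : a ≠ b) (hlam : lam ≠ 0)
    (hg : discriminant d e S g = joukowsky a b lam • g) :
    walk d e S a b (eigenLift e S b lam g) = lam • eigenLift e S b lam g := by
  have hdSe : d (S (e g)) = joukowsky a b lam • g := hg
  have hμ := sub_mul_mul_joukowsky hab hlam
  simp only [walk, eigenLift, LinearMap.comp_apply, LinearMap.add_apply, LinearMap.smul_apply,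
    map_add, map_smul, coin_apply, hde g, hdSe, hS (e g)]
  linear_combination (norm := module) congrArg (· • S (e g)) hμ

lemma sub_smul_d_eigenLift (hde : LeftInverse d e) (hab : a ≠ b) (hlam : lam ≠ 0)
    (hg : discriminant d e S g = joukowsky a b lam • g) :
    (a - b) • d (eigenLift e S b lam g) = (lam ^ 2 - b ^ 2) • g := by
  have hdSe : d (S (e g)) = joukowsky a b lam • g := hg
  have hμ := sub_mul_mul_joukowsky hab hlam
  simp only [eigenLift, LinearMap.add_apply, LinearMap.smul_apply, LinearMap.comp_apply, map_add,
    map_smul, hde g, hdSe]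
  linear_combination (norm := module) congrArg (· • g) hμ

variable (d e S a b) in
def walkEigenspaceEquiv (hde : LeftInverse d e) (hS : Involutive S) (hab : a ≠ b) (hlam : lam ≠ 0)
    (hlamb : lam ^ 2 ≠ b ^ 2) :
    End.eigenspace (walk d e S a b) lam ≃ₗ[𝕜]
      End.eigenspace (discriminant d e S) (joukowsky a b lam) :=
  have hc : lam ^ 2 - b ^ 2 ≠ 0 := sub_ne_zero.mpr hlamb
  .ofLinearMap
    (d.restrict fun _ hψ => End.mem_eigenspace_iff.mpr <|
      discriminant_d_of_walk_eq hde hS hab hlam (End.mem_eigenspace_iff.mp hψ))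
    (((a - b) / (lam ^ 2 - b ^ 2)) • (eigenLift e S b lam).restrict fun _ hg =>
      End.mem_eigenspace_iff.mpr <| walk_eigenLift hde hS hab hlam (End.mem_eigenspace_iff.mp hg))
    (by
      ext g
      simp only [LinearMap.comp_apply, LinearMap.smul_apply, map_smul, LinearMap.coe_restrict_apply,
        Submodule.coe_smul, LinearMap.id_coe, id_eq]
      rw [div_eq_inv_mul, mul_smul,
        sub_smul_d_eigenLift hde hab hlam (End.mem_eigenspace_iff.mp g.2), smul_smul,
        inv_mul_cancel₀ hc, one_smul])
    (by
      ext ψ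
      simp only [LinearMap.comp_apply, LinearMap.smul_apply, LinearMap.coe_restrict_apply,
        Submodule.coe_smul, LinearMap.id_coe, id_eq]
      rw [div_eq_inv_mul, mul_smul,
        sub_smul_eigenLift_d_of_walk_eq hS (End.mem_eigenspace_iff.mp ψ.2), smul_smul,
        inv_mul_cancel₀ hc, one_smul])

end QuantumWalk

lemma Module.End.exists_ne_zero_apply_eq_smul_iff {R M : Type*} [CommRing R] [AddCommGroup M]
    [Module R M] (f : End R M) (μ : R) :
    (∃ x, x ≠ 0 ∧ f x = μ • x) ↔ Nontrivial (f.eigenspace μ) := by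
  rw [Submodule.nontrivial_iff_ne_bot, Submodule.ne_bot_iff]
  simp only [End.mem_eigenspace_iff, and_comm]

open QuantumWalk in
theorem stmt_14_general {H : Type u_1} {K : Type u_2}
    [NormedAddCommGroup H] [InnerProductSpace ℂ H] [CompleteSpace H]
    [NormedAddCommGroup K] [InnerProductSpace ℂ K] [CompleteSpace K]
    (a b : ℝ)
    (d : H →L[ℂ] K) (hd : d ∘L (adjoint d) = 1)
    (S : H →L[ℂ] H) (hS2 : S ∘L S = 1)
    (C : H →L[ℂ] H)
    (hC : C = (a : ℂ) • ((adjoint d) ∘L d) + (b : ℂ) • (1 - (adjoint d) ∘L d))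
    (U : H →L[ℂ] H) (hU : U = S ∘L C)
    (T : K →L[ℂ] K) (hT : T = d ∘L S ∘L (adjoint d))
    (h4 : a ≠ b) :
    ∀ lam : ℂ, lam ∉ ({0, (a : ℂ), -(a : ℂ), (b : ℂ), -(b : ℂ)} : Set ℂ) →
      Cardinal.lift.{u_2}
          (Module.rank ℂ (LinearMap.ker ((U - lam • (1 : H →L[ℂ] H) : H →L[ℂ] H) : H →ₗ[ℂ] H))) =
        Cardinal.lift.{u_1} (Module.rank ℂ (LinearMap.ker
          ((T - ((lam - (a * b : ℝ) * lam⁻¹) / ((a : ℂ) - (b : ℝ))) • (1 : K →L[ℂ] K) : K →L[ℂ] K) : K →ₗ[ℂ] K))) ∧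
      ((∃ ψ : H, ψ ≠ 0 ∧ U ψ = lam • ψ) ↔
        (∃ g : K, g ≠ 0 ∧ T g = ((lam - (a * b : ℝ) * lam⁻¹) / ((a : ℂ) - (b : ℝ))) • g)) := by
  intro lam hlam
  simp only [Set.mem_insert_iff, Set.mem_singleton_iff, not_or] at hlam
  obtain ⟨hlam0, -, -, hlamb, hlamb'⟩ := hlam
  have hde : LeftInverse d (adjoint d) := fun y => by simpa using congr($hd y)
  have hS : Involutive S := fun x => by simpa using congr($hS2 x)
  have hlamb2 : lam ^ 2 ≠ (b : ℂ) ^ 2 := by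
    rw [Ne, sq_eq_sq_iff_eq_or_eq_neg]; tauto
  have hU' : (U : End ℂ H) = walk (d : H →ₗ[ℂ] K) (adjoint d) S a b := by
    subst hU hC; ext; simp [walk, coin]
  have hT' : (T : End ℂ K) = discriminant (d : H →ₗ[ℂ] K) (adjoint d) S := by
    subst hT; rfl
  have hμ : (lam - (a * b : ℝ) * lam⁻¹) / ((a : ℂ) - (b : ℝ)) = joukowsky (a : ℂ) b lam := by
    simp [joukowsky]
  let Φ := walkEigenspaceEquiv (d : H →ₗ[ℂ] K) (adjoint d) S a b hde hS
    (by exact_mod_cast h4) hlam0 hlamb2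
  have hkerU : LinearMap.ker ((U - lam • (1 : H →L[ℂ] H) : H →L[ℂ] H) : H →ₗ[ℂ] H) =
      End.eigenspace (U : End ℂ H) lam := End.eigenspace_def.symm
  have hkerT : LinearMap.ker
      ((T - joukowsky (a : ℂ) b lam • (1 : K →L[ℂ] K) : K →L[ℂ] K) : K →ₗ[ℂ] K) =
      End.eigenspace (T : End ℂ K) (joukowsky (a : ℂ) b lam) := End.eigenspace_def.symm
  have hexU := End.exists_ne_zero_apply_eq_smul_iff (U : End ℂ H) lam
  have hexT := End.exists_ne_zero_apply_eq_smul_iff (T : End ℂ K) (joukowsky (a : ℂ) b lam)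
  rw [hμ, hkerU, hkerT]
  simp only [ContinuousLinearMap.coe_coe] at hexU hexT
  rw [hexU, hexT, hU', hT']
  exact ⟨Φ.lift_rank_eq, Φ.toEquiv.nontrivial_congr⟩

/-- Under the standing assumptions, for every `λ ∉ {0, a, −a, b, −b}`,
`dim ker(U − λ) = dim ker(T − φ_{a,b}(λ))`; in particular `λ` is an eigenvalue of
`U` iff `φ_{a,b}(λ)` is an eigenvalue of `T`. -/
theorem stmt_14 {H : Type u_1} {K : Type u_2}
    [NormedAddCommGroup H] [InnerProductSpace ℂ H] [CompleteSpace H] [Nontrivial H]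
    [NormedAddCommGroup K] [InnerProductSpace ℂ K] [CompleteSpace K] [Nontrivial K]
    (a b : ℝ)
    (d : H →L[ℂ] K) (hd : d ∘L (adjoint d) = 1)
    (S : H →L[ℂ] H) (hS : IsSelfAdjoint S) (hS2 : S ∘L S = 1)
    (C : H →L[ℂ] H)
    (hC : C = (a : ℂ) • ((adjoint d) ∘L d) + (b : ℂ) • (1 - (adjoint d) ∘L d))
    (U : H →L[ℂ] H) (hU : U = S ∘L C)
    (T : K →L[ℂ] K) (hT : T = d ∘L S ∘L (adjoint d))
    (h1 : (adjoint d) ∘L d ≠ 1) (h2 : S ≠ 1) (h3 : S ≠ -1)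
    (h4 : a ≠ b) (h5 : a ≠ -b) (h6 : a * b ≠ 0) :
    ∀ lam : ℂ, lam ∉ ({0, (a : ℂ), -(a : ℂ), (b : ℂ), -(b : ℂ)} : Set ℂ) →
      Cardinal.lift.{u_2}
          (Module.rank ℂ (LinearMap.ker ((U - lam • (1 : H →L[ℂ] H) : H →L[ℂ] H) : H →ₗ[ℂ] H))) =
        Cardinal.lift.{u_1} (Module.rank ℂ (LinearMap.ker
          ((T - ((lam - (a * b : ℝ) * lam⁻¹) / ((a : ℂ) - (b : ℝ))) • (1 : K →L[ℂ] K) : K →L[ℂ] K) : K →ₗ[ℂ] K))) ∧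
      ((∃ ψ : H, ψ ≠ 0 ∧ U ψ = lam • ψ) ↔
        (∃ g : K, g ≠ 0 ∧ T g = ((lam - (a * b : ℝ) * lam⁻¹) / ((a : ℂ) - (b : ℝ))) • g)) :=
  stmt_14_general a b d hd S hS2 C hC U hU T hT h4
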